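/- arXiv:math/0604604 — 4 statements merged into one kernel-verified Lean document; each statement's English description precedes it below -/
import Mathlib

section
/- For 1 ≤ k ≤ n+1, the polynomial Q_k^{n+1}(x₁,x₂) = T_{n-k+1}(x₁)T_k(x₂) + T_{n-k+1}(x₂)T_{k-1}(x₁) vanishes at every Padua point in Pad_n. -/
open Real MeasureTheory Finset

/-- Evaluated Chebyshev polynomial of the first kind. -/
noncomputable def chT (m : ℤ) (x : ℝ) : ℝ := (Polynomial.Chebyshev.T ℝ m).eval x

/-- First coordinates of Padua points. -/
noncomputable def padXi (n k : ℕ) : ℝ := Real.cos (k * π / n)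

/-- Second coordinates of Padua points. -/
noncomputable def padEta (n k j : ℕ) : ℝ :=
  if Even k then Real.cos ((2 * (j : ℝ) - 1) * π / (n + 1))
  else Real.cos ((2 * (j : ℝ) - 2) * π / (n + 1))

/-- The set of Padua points of degree `n`. -/
noncomputable def Pad (n : ℕ) : Set (ℝ × ℝ) :=
  {p | ∃ k j : ℕ, k ≤ n ∧ 1 ≤ j ∧ j ≤ n / 2 + 1 ∧ p = (padXi n k, padEta n k j)}

/-- Normalized Chebyshev polynomials. -/
noncomputable def chTtil (m : ℕ) (x : ℝ) : ℝ :=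
  if m = 0 then 1 else Real.sqrt 2 * chT m x

/-- Orthonormal basis `P_k^m` of bivariate Chebyshev polynomials (functions). -/
noncomputable def chP (m k : ℕ) (x : ℝ × ℝ) : ℝ := chTtil (m - k) x.1 * chTtil k x.2

/-- Reproducing kernel of `Π_n²` in `L²(W)`. -/
noncomputable def kerK (n : ℕ) (x y : ℝ × ℝ) : ℝ :=
  ∑ m ∈ Finset.range (n + 1), ∑ j ∈ Finset.range (m + 1), chP m j x * chP m j y

/-- Modified kernel `K_n^*`. -/
noncomputable def kerKstar (n : ℕ) (x y : ℝ × ℝ) : ℝ :=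
  kerK n x y - chT n x.1 * chT n y.1

/-- The generators `Q_k^{n+1}` of the Padua ideal (as functions). -/
noncomputable def chQ (n k : ℕ) (x : ℝ × ℝ) : ℝ :=
  if k = 0 then chT (n + 1) x.1 - chT ((n : ℤ) - 1) x.1
  else chT ((n : ℤ) - k + 1) x.1 * chT k x.2 + chT ((n : ℤ) - k + 1) x.2 * chT ((k : ℤ) - 1) x.1

/-- The product Chebyshev weight on `[-1,1]²`. -/
noncomputable def chW (x : ℝ × ℝ) : ℝ :=
  1 / (π ^ 2 * Real.sqrt (1 - x.1 ^ 2) * Real.sqrt (1 - x.2 ^ 2))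

/-- Evaluation of a bivariate polynomial at a point of `ℝ²`. -/
noncomputable def ev2 (P : MvPolynomial (Fin 2) ℝ) (x : ℝ × ℝ) : ℝ :=
  MvPolynomial.eval (fun i : Fin 2 => if i = 0 then x.1 else x.2) P


/-- Key reflection identity: `cos((N - r) * (s·π/N)) = (-1)^s cos(r * (s·π/N))`. -/
lemma cos_reflect (N : ℕ) (hN : (N : ℝ) ≠ 0) (s r : ℤ) :
    Real.cos (((N : ℝ) - r) * (s * π / N)) = (-1) ^ s * Real.cos (r * (s * π / N)) := by
  have h : ((N : ℝ) - r) * (s * π / N) = s * π - r * (s * π / N) := by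
    field_simp
  rw [h, Real.cos_int_mul_pi_sub]

/-- for `1 ≤ k ≤ n+1`, `Q_k^{n+1}` vanishes at every Padua point. -/
theorem Qk_vanishes (n k : ℕ) (hn : 1 ≤ n) (hk1 : 1 ≤ k) (hk2 : k ≤ n + 1)
    (p : ℝ × ℝ) (hp : p ∈ Pad n) :
    chQ n k p = 0 := by
  obtain ⟨i, j, hin, hj1, hj2, hpe⟩ := hp
  subst hpe
  have hk0 : k ≠ 0 := by omega
  have hn0 : (n : ℝ) ≠ 0 := Nat.cast_ne_zero.mpr (by omega)
  have hn1 : ((n + 1 : ℕ) : ℝ) ≠ 0 := Nat.cast_ne_zero.mpr (by omega)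
  simp only [chQ, if_neg hk0, chT, padXi, padEta]
  rw [Polynomial.Chebyshev.T_real_cos, Polynomial.Chebyshev.T_real_cos]
  have hA : ((((n : ℤ) - k + 1) : ℤ) : ℝ) * ((i : ℝ) * π / n)
      = ((n : ℝ) - (((k : ℤ) - 1 : ℤ) : ℝ)) * (((i : ℤ) : ℝ) * π / n) := by
    push_cast; ring
  rw [hA, cos_reflect n hn0 i ((k : ℤ) - 1)]
  by_cases hie : Even i
  · simp only [if_pos hie]
    rw [Polynomial.Chebyshev.T_real_cos, Polynomial.Chebyshev.T_real_cos]
    have hB : ((((n : ℤ) - k + 1) : ℤ) : ℝ) * ((2 * (j : ℝ) - 1) * π / (n + 1))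
        = (((n + 1 : ℕ) : ℝ) - ((k : ℤ) : ℝ)) * (((2 * (j : ℤ) - 1 : ℤ) : ℝ) * π / ((n + 1 : ℕ) : ℝ)) := by
      push_cast; ring
    have hC : ((k : ℤ) : ℝ) * ((2 * (j : ℝ) - 1) * π / (n + 1))
        = ((k : ℤ) : ℝ) * (((2 * (j : ℤ) - 1 : ℤ) : ℝ) * π / ((n + 1 : ℕ) : ℝ)) := by
      push_cast; ring
    rw [hB, hC, cos_reflect (n + 1) hn1 (2 * (j : ℤ) - 1) (k : ℤ)]
    have h1 : ((-1 : ℝ)) ^ (i : ℤ) = 1 := by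
      obtain ⟨m, hm⟩ := hie
      rw [hm]; push_cast
      rw [show (m : ℤ) + m = 2 * m by ring, zpow_mul]
      norm_num
    have h2 : ((-1 : ℝ)) ^ (2 * (j : ℤ) - 1) = -1 := by
      rw [Odd.neg_one_zpow ⟨(j : ℤ) - 1, by ring⟩]
    rw [h1, h2]; push_cast; ring_nf
  · simp only [if_neg hie]
    rw [Polynomial.Chebyshev.T_real_cos, Polynomial.Chebyshev.T_real_cos]
    have hB : ((((n : ℤ) - k + 1) : ℤ) : ℝ) * ((2 * (j : ℝ) - 2) * π / (n + 1))
        = (((n + 1 : ℕ) : ℝ) - ((k : ℤ) : ℝ)) * (((2 * (j : ℤ) - 2 : ℤ) : ℝ) * π / ((n + 1 : ℕ) : ℝ)) := by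
      push_cast; ring
    have hC : ((k : ℤ) : ℝ) * ((2 * (j : ℝ) - 2) * π / (n + 1))
        = ((k : ℤ) : ℝ) * (((2 * (j : ℤ) - 2 : ℤ) : ℝ) * π / ((n + 1 : ℕ) : ℝ)) := by
      push_cast; ring
    rw [hB, hC, cos_reflect (n + 1) hn1 (2 * (j : ℤ) - 2) (k : ℤ)]
    have h1 : ((-1 : ℝ)) ^ (i : ℤ) = -1 := by
      rw [Odd.neg_one_zpow]
      exact_mod_cast Nat.not_even_iff_odd.mp hie
    have h2 : ((-1 : ℝ)) ^ (2 * (j : ℤ) - 2) = 1 := by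
      rw [show 2 * (j : ℤ) - 2 = 2 * ((j : ℤ) - 1) by ring, zpow_mul]
      norm_num
    rw [h1, h2]; push_cast; ring_nf
end

section
/- For each k with 0 ≤ k ≤ n+1, the polynomial Q_k^{n+1} is orthogonal to every bivariate polynomial of total degree at most n-2 with respect to the Chebyshev weight W(x₁,x₂) = 1/(π²√(1-x₁²)√(1-x₂²)) on [-1,1]². -/
open Real MeasureTheory Finset

/-!
`Q_k^{n+1}(x₁, x₂)` is a combination of products `T_a(x₁) T_b(x₂)` with `|a| + |b| > n - 2`.
The weight is a product, so against a monomial `x₁^i x₂^j` such a product integrates to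
`(∫ T_a(t) tⁱ) (∫ T_b(t) tʲ)` against the one-variable weight `1/√(1 - t²)`. Since `i < |a|` or
`j < |b|`, one factor vanishes: `T_a` is orthogonal to every polynomial of degree less than `|a|`.
-/

open Polynomial Polynomial.Chebyshev

theorem MeasureTheory.integral_integral_finset_sum_mul {α β ι 𝕜 : Type*} [RCLike 𝕜]
    [MeasurableSpace α] [MeasurableSpace β] {μ : Measure α} {ν : Measure β} (s : Finset ι)
    {f : ι → α → 𝕜} {g : ι → β → 𝕜} (hf : ∀ i ∈ s, Integrable (f i) μ)
    (hg : ∀ i ∈ s, Integrable (g i) ν) :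
    ∫ x, ∫ y, ∑ i ∈ s, f i x * g i y ∂ν ∂μ = ∑ i ∈ s, (∫ x, f i x ∂μ) * ∫ y, g i y ∂ν := by
  have hinner : ∀ x, ∫ y, ∑ i ∈ s, f i x * g i y ∂ν = ∑ i ∈ s, f i x * ∫ y, g i y ∂ν := fun x => by
    rw [integral_finsetSum _ fun i hi => (hg i hi).const_mul _]
    simp_rw [integral_const_mul]
  simp_rw [hinner]
  rw [integral_finsetSum _ fun i hi => (hf i hi).mul_const _]
  simp_rw [integral_mul_const]

namespace Polynomial.Chebyshev

theorem integral_eval_T_real_mul_eval_measureT_eq_zero {a : ℤ} {p : ℝ[X]}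
    (hp : p.degree < a.natAbs) : ∫ x, (T ℝ a).eval x * p.eval x ∂measureT = 0 := by
  -- `p` is a combination of `T_j`, `j < |a|`, and `2 T_a T_j = T_{a+j} + T_{a-j}` with `a ± j ≠ 0`
  have hmem : p ∈ degreeLT ℝ a.natAbs := mem_degreeLT.2 hp
  rw [← Sequence.span_degreeLT (chebyshevTsequence ℝ) (by simp),
    show Set.Iio a.natAbs = (Finset.range a.natAbs : Set ℕ) by simp,
    Submodule.mem_span_image_finset_iff_exists_fun'] at hmem
  obtain ⟨c, rfl⟩ := hmem
  simp_rw [eval_finsetSum, eval_smul, smul_eq_mul, Finset.mul_sum]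
  rw [integral_finsetSum _ fun j _ => integrable_measureT (by fun_prop)]
  refine Finset.sum_eq_zero fun j hj => ?_
  have hj : j < a.natAbs := Finset.mem_range.1 hj
  simp_rw [chebyshevTsequence, mul_left_comm _ (c j), integral_const_mul,
    integral_eval_T_real_mul_eval_T_real_measureT,
    integral_eval_T_real_measureT_of_ne_zero (show a + j ≠ 0 by omega),
    integral_eval_T_real_measureT_of_ne_zero (show a - j ≠ 0 by omega)]
  simp

end Polynomial.Chebyshev

theorem chW_eq (x y : ℝ) : chW (x, y) = (π ^ 2)⁻¹ * (√(1 - x ^ 2)⁻¹ * √(1 - y ^ 2)⁻¹) := by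
  simp only [chW, Real.sqrt_inv]
  field_simp

theorem integral_integral_mul_chW (F : ℝ → ℝ → ℝ) :
    ∫ x in (-1 : ℝ)..1, ∫ y in (-1 : ℝ)..1, F x y * chW (x, y) =
      (π ^ 2)⁻¹ * ∫ x, ∫ y, F x y ∂measureT ∂measureT := by
  simp_rw [integral_measureT, ← intervalIntegral.integral_mul_const,
    ← intervalIntegral.integral_const_mul, chW_eq]
  exact intervalIntegral.integral_congr fun x _ =>
    intervalIntegral.integral_congr fun y _ => by ring

theorem ev2_eq_sum (P : MvPolynomial (Fin 2) ℝ) (x y : ℝ) :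
    ev2 P (x, y) = ∑ d ∈ P.support, P.coeff d * (x ^ d 0 * y ^ d 1) := by
  simp [ev2, MvPolynomial.eval_eq', Fin.prod_univ_two]

theorem integral_integral_sum_chT_mul_chT_mul_ev2_eq_zero {ι : Type*} (s : Finset ι)
    (c : ι → ℝ) (a b : ι → ℤ) (P : MvPolynomial (Fin 2) ℝ)
    (hdeg : ∀ i ∈ s, P.totalDegree < (a i).natAbs + (b i).natAbs) :
    ∫ x, ∫ y, (∑ i ∈ s, c i * chT (a i) x * chT (b i) y) * ev2 P (x, y) ∂measureT ∂measureT
      = 0 := by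
  have hsplit : ∀ x y, (∑ i ∈ s, c i * chT (a i) x * chT (b i) y) * ev2 P (x, y) =
      ∑ q ∈ s ×ˢ P.support, (c q.1 * P.coeff q.2 * ((T ℝ (a q.1)).eval x * (X ^ q.2 0).eval x))
        * ((T ℝ (b q.1)).eval y * (X ^ q.2 1).eval y) := fun x y => by
    rw [ev2_eq_sum, Finset.sum_mul_sum, Finset.sum_product]
    refine Finset.sum_congr rfl fun i _ => Finset.sum_congr rfl fun d _ => ?_
    simp only [chT, eval_pow, eval_X]
    ring
  simp_rw [hsplit]
  rw [integral_integral_finset_sum_mul _ (fun _ _ => integrable_measureT (by fun_prop))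
    (fun _ _ => integrable_measureT (by fun_prop))]
  refine Finset.sum_eq_zero fun ⟨i, d⟩ hq => ?_
  obtain ⟨hi, hd⟩ := Finset.mem_product.1 hq
  have hsum : d 0 + d 1 < (a i).natAbs + (b i).natAbs := by
    have := MvPolynomial.le_totalDegree hd
    rw [Finsupp.sum_fintype _ _ fun _ => rfl, Fin.sum_univ_two] at this
    exact this.trans_lt (hdeg i hi)
  rw [integral_const_mul]
  rcases (by omega : d 0 < (a i).natAbs ∨ d 1 < (b i).natAbs) with h | h
  · rw [integral_eval_T_real_mul_eval_measureT_eq_zero (a := a i) (by simpa using h), mul_zero,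
      zero_mul]
  · rw [integral_eval_T_real_mul_eval_measureT_eq_zero (a := b i) (by simpa using h), mul_zero]

theorem Qk_orthogonal_general (n : ℕ) (hn : 2 ≤ n) (k : ℕ)
    (P : MvPolynomial (Fin 2) ℝ) (hP : P.totalDegree ≤ n - 2) :
    (∫ x in (-1 : ℝ)..1, ∫ y in (-1 : ℝ)..1,
        chQ n k (x, y) * ev2 P (x, y) * chW (x, y)) = 0 := by
  suffices h : ∃ (c : Fin 2 → ℝ) (a b : Fin 2 → ℤ),
      (∀ i, n - 2 < (a i).natAbs + (b i).natAbs) ∧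
        ∀ x y, chQ n k (x, y) = ∑ i, c i * chT (a i) x * chT (b i) y by
    obtain ⟨c, a, b, hdeg, hQ⟩ := h
    refine (integral_integral_mul_chW fun x y => chQ n k (x, y) * ev2 P (x, y)).trans ?_
    simp_rw [hQ]
    rw [integral_integral_sum_chT_mul_chT_mul_ev2_eq_zero _ c a b P
      fun i _ => hP.trans_lt (hdeg i), mul_zero]
  rcases eq_or_ne k 0 with rfl | hk
  · refine ⟨![1, -1], ![n + 1, n - 1], ![0, 0], ?_, fun x y => ?_⟩
    · simp only [Fin.forall_fin_two, Matrix.cons_val_zero, Matrix.cons_val_one,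
        Matrix.cons_val_fin_one]
      omega
    · simp [chQ, chT, Fin.sum_univ_two, sub_eq_add_neg]
  · refine ⟨![1, 1], ![n - k + 1, k - 1], ![k, n - k + 1], ?_, fun x y => ?_⟩
    · simp only [Fin.forall_fin_two, Matrix.cons_val_zero, Matrix.cons_val_one,
        Matrix.cons_val_fin_one]
      omega
    · simp only [chQ, hk, if_false, chT, Fin.sum_univ_two, Matrix.cons_val_zero,
        Matrix.cons_val_one, Matrix.cons_val_fin_one]
      ring

/-- each `Q_k^{n+1}` is orthogonal to all bivariate polynomials
of total degree at most `n-2` with respect to the Chebyshev weight. -/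
theorem Qk_orthogonal (n : ℕ) (hn : 2 ≤ n) (k : ℕ) (hk : k ≤ n + 1)
    (P : MvPolynomial (Fin 2) ℝ) (hP : P.totalDegree ≤ n - 2) :
    (∫ x in (-1 : ℝ)..1, ∫ y in (-1 : ℝ)..1,
        chQ n k (x, y) * ev2 P (x, y) * chW (x, y)) = 0 :=
  Qk_orthogonal_general n hn k P hP
end

section
/- Define K_n*(x,y) = K_n(x,y) - T_n(x₁)T_n(y₁), where K_n is the reproducing kernel of Π_n² in L²(W). Then K_n*(x,y) = 0 whenever x and y are distinct Padua points in Pad_n. -/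
/-!
A Padua point is `(cos (k π / n), cos (l π / (n + 1)))` with `k + l` odd. Writing both points
this way, product-to-sum turns `K_n(x, y)` into the average of four sums
`Σ_{a + b ≤ n} ε_a ε_b cos (a p π / n) cos (b q π / (n + 1))` with `p = k ± k'`, `q = l ± l'`,
and `p + q` even. For such `p, q` the unweighted summand is invariant under
`(a, b) ↦ (n - a, n + 1 - b)`, which exchanges the triangle `a + b ≤ n` with its complement in
`[0, n] × [0, n + 1]`, so the triangle sum is half a product of two one-variable cosine sums.
These equal `(1 + (-1)^p) / 2` unless `2n ∣ p`, resp. `2(n + 1) ∣ q`, and both cannot happen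
when `x ≠ y`. Each of the four sums is then `(-1)^p`, and the average is
`(-1)^(k + k') = T_n(x₁) T_n(y₁)`.
-/

open Real MeasureTheory Finset

noncomputable def chEps (a : ℕ) : ℝ := if a = 0 then 1 else 2

def triangleSum (n : ℕ) (f : ℕ → ℕ → ℝ) : ℝ :=
  ∑ a ∈ range (n + 1), ∑ b ∈ range (n + 1 - a), f a b

noncomputable def trigKernel (n : ℕ) (α β : ℝ) : ℝ :=
  triangleSum n fun a b => chEps a * chEps b * (cos (a * α) * cos (b * β))

theorem sum_range_chEps_mul {m : ℕ} (hm : 0 < m) (g : ℕ → ℝ) :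
    ∑ b ∈ range m, chEps b * g b = 2 * ∑ b ∈ range m, g b - g 0 := by
  have h : ∀ b ∈ range m, chEps b * g b = 2 * g b - if b = 0 then g b else 0 := by
    intro b _
    unfold chEps
    split <;> ring
  rw [sum_congr rfl h, sum_sub_distrib, sum_ite_eq' (range m) 0 g, if_pos (mem_range.mpr hm),
    mul_sum]

theorem triangleSum_chEps_mul (n : ℕ) (f : ℕ → ℕ → ℝ) :
    triangleSum n (fun a b => chEps a * chEps b * f a b) =
      4 * triangleSum n f - 2 * ∑ a ∈ range (n + 1), f a 0 - 2 * ∑ b ∈ range (n + 1), f 0 b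
        + f 0 0 := by
  have hrow : ∀ a ∈ range (n + 1), ∑ b ∈ range (n + 1 - a), chEps a * chEps b * f a b =
      chEps a * (2 * ∑ b ∈ range (n + 1 - a), f a b - f a 0) := by
    intro a ha
    rw [← sum_range_chEps_mul (by grind), mul_sum]
    exact sum_congr rfl fun b _ => by ring
  rw [triangleSum, sum_congr rfl hrow, sum_range_chEps_mul (by omega : 0 < n + 1), triangleSum]
  simp only [mul_sub, sum_sub_distrib, ← mul_sum, Nat.sub_zero]
  ring

theorem two_mul_triangleSum_of_symm (n : ℕ) (f : ℕ → ℕ → ℝ)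
    (hf : ∀ a ≤ n, ∀ b ≤ n + 1, f (n - a) (n + 1 - b) = f a b) :
    2 * triangleSum n f = ∑ a ∈ range (n + 1), ∑ b ∈ range (n + 2), f a b := by
  have hsplit : ∀ a ∈ range (n + 1), ∑ b ∈ range (n + 2), f a b =
      ∑ b ∈ range (n + 1 - a), f a b + ∑ b ∈ range (a + 1), f a (n + 1 - b) := by
    intro a ha
    rw [show n + 2 = (n + 1 - a) + (a + 1) by grind, sum_range_add, ← sum_range_reflect _ (a + 1)]
    congr 1
    exact sum_congr rfl fun b hb => by congr 1; grind
  have hupper : ∑ a ∈ range (n + 1), ∑ b ∈ range (a + 1), f a (n + 1 - b) = triangleSum n f := by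
    rw [triangleSum, ← sum_range_reflect]
    refine sum_congr rfl fun a ha => ?_
    rw [mem_range] at ha
    rw [show n + 1 - 1 - a + 1 = n + 1 - a by grind]
    refine sum_congr rfl fun b hb => ?_
    rw [mem_range] at hb
    rw [show n + 1 - 1 - a = n - a by grind, hf a (by grind) b (by grind)]
  rw [sum_congr rfl hsplit, sum_add_distrib, hupper, triangleSum]
  ring

theorem two_mul_sin_half_mul_sum_range_cos (θ : ℝ) (m : ℕ) :
    2 * sin (θ / 2) * ∑ a ∈ range (m + 1), cos (a * θ) = sin (m * θ + θ / 2) + sin (θ / 2) := by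
  induction m with
  | zero => simp only [zero_add, sum_range_one, Nat.cast_zero, zero_mul, cos_zero]; ring
  | succ m ih =>
    rw [sum_range_succ, mul_add, ih]
    have h₁ : (m : ℝ) * θ + θ / 2 = (m + 1 : ℕ) * θ - θ / 2 := by push_cast; ring
    rw [h₁, sin_sub, sin_add]
    ring

theorem sum_range_cos_mul_int_mul_pi_div {m : ℕ} (hm : m ≠ 0) {p : ℤ} (hp : ¬2 * (m : ℤ) ∣ p) :
    ∑ a ∈ range (m + 1), cos (a * (p * (π / m))) = (1 + cos (p * π)) / 2 := by
  set θ := p * (π / m)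
  have hθ : (m : ℝ) * θ = p * π := by simp only [θ]; field_simp
  have hsin : sin (θ / 2) ≠ 0 := by
    rw [Ne, sin_eq_zero_iff]
    rintro ⟨t, ht⟩
    refine hp ⟨t, ?_⟩
    have hpπ : (p : ℝ) * π = (2 * m * t : ℤ) * π := by
      rw [← hθ]; push_cast; linear_combination (-2 * (m : ℝ)) * ht
    exact_mod_cast mul_right_cancel₀ pi_ne_zero hpπ
  have h := two_mul_sin_half_mul_sum_range_cos θ m
  rw [hθ, sin_add, sin_int_mul_pi] at h
  field_simp
  apply mul_left_cancel₀ hsin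
  linear_combination h

theorem cos_int_mul_pi_sq (p : ℤ) : cos (p * π) ^ 2 = 1 := by
  simpa [sin_int_mul_pi] using cos_sq_add_sin_sq (p * π)

theorem cos_nat_sub_mul_int_mul_pi_div {m a : ℕ} (hm : m ≠ 0) (ha : a ≤ m) (p : ℤ) :
    cos ((m - a : ℕ) * (p * (π / m))) = cos (p * π) * cos (a * (p * (π / m))) := by
  have h : ((m - a : ℕ) : ℝ) * (p * (π / m)) = p * π - a * (p * (π / m)) := by
    rw [Nat.cast_sub ha]; field_simp
  rw [h, cos_sub, sin_int_mul_pi, zero_mul, add_zero]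

theorem cos_int_mul_pi_eq_one_of_dvd {m s : ℤ} (h : 2 * m ∣ s) : cos (s * π) = 1 := by
  obtain ⟨t, rfl⟩ := h
  rw [show ((2 * m * t : ℤ) : ℝ) * π = (m * t : ℤ) * (2 * π) by push_cast; ring]
  exact cos_int_mul_two_pi _

theorem cos_int_mul_pi_eq_of_even_add {p q : ℤ} (h : Even (p + q)) :
    cos (q * π) = cos (p * π) := by
  obtain ⟨r, hr⟩ := h
  rw [show (q : ℝ) * π = r * (2 * π) - p * π by
    rw [show q = r + r - p by omega]; push_cast; ring, cos_int_mul_two_pi_sub]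

theorem trigKernel_padua {n : ℕ} (hn : n ≠ 0) {p q : ℤ} (hpq : Even (p + q))
    (hnd : ¬(2 * (n : ℤ) ∣ p ∧ 2 * ((n : ℤ) + 1) ∣ q)) :
    trigKernel n (p * (π / n)) (q * (π / (n + 1))) = cos (p * π) := by
  set e := cos (p * π)
  have hqe : cos (q * π) = e := cos_int_mul_pi_eq_of_even_add hpq
  set C : ℕ → ℝ := fun a => cos (a * (p * (π / n)))
  set D : ℕ → ℝ := fun b => cos (b * (q * (π / (n + 1))))
  have hC : ∀ a ≤ n, C (n - a) = e * C a := fun a ha => cos_nat_sub_mul_int_mul_pi_div hn ha p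
  have hD : ∀ b ≤ n + 1, D (n + 1 - b) = e * D b := by
    intro b hb
    simpa [hqe] using cos_nat_sub_mul_int_mul_pi_div n.succ_ne_zero hb q
  have hA : ¬2 * (n : ℤ) ∣ p → ∑ a ∈ range (n + 1), C a = (1 + e) / 2 :=
    sum_range_cos_mul_int_mul_pi_div hn
  have hB : ¬2 * ((n : ℤ) + 1) ∣ q → ∑ b ∈ range (n + 2), D b = (1 + e) / 2 := by
    intro hq
    simpa [hqe] using sum_range_cos_mul_int_mul_pi_div n.succ_ne_zero (p := q) (by simpa using hq)
  have hsym : 2 * triangleSum n (fun a b => C a * D b) =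
      (∑ a ∈ range (n + 1), C a) * ∑ b ∈ range (n + 2), D b := by
    rw [two_mul_triangleSum_of_symm, sum_mul_sum]
    intro a ha b hb
    rw [hC a ha, hD b hb]
    linear_combination (C a * D b) * cos_int_mul_pi_sq p
  have hlast : ∑ b ∈ range (n + 2), D b = ∑ b ∈ range (n + 1), D b + e := by
    rw [sum_range_succ]
    simpa [D] using hD 0 n.succ.zero_le
  rw [trigKernel, triangleSum_chEps_mul]
  simp only [Nat.cast_zero, zero_mul, cos_zero, mul_one, one_mul]
  change 4 * triangleSum n (fun a b => C a * D b) - 2 * ∑ a ∈ range (n + 1), C a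
    - 2 * ∑ b ∈ range (n + 1), D b + 1 = e
  by_cases hp : 2 * (n : ℤ) ∣ p
  · have he : e = 1 := cos_int_mul_pi_eq_one_of_dvd hp
    have hB' := hB fun hq => hnd ⟨hp, hq⟩
    rw [hB', he] at hsym hlast
    linear_combination 2 * hsym + 2 * hlast - he
  · rw [hA hp] at hsym ⊢
    by_cases hq : 2 * ((n : ℤ) + 1) ∣ q
    · have he : e = 1 := hqe ▸ cos_int_mul_pi_eq_one_of_dvd hq
      rw [hlast, he] at hsym
      linear_combination 2 * hsym - 2 * he
    · rw [hB hq] at hsym hlast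
      linear_combination 2 * hsym + 2 * hlast + cos_int_mul_pi_sq p / 2

theorem eq_of_two_mul_dvd_sub_or_add {m k k' p : ℤ} (hk : k ∈ Set.Icc 0 m)
    (hk' : k' ∈ Set.Icc 0 m) (hp : p = k - k' ∨ p = k + k') (h : 2 * m ∣ p) : k = k' := by
  obtain ⟨hk₀, hkm⟩ := hk
  obtain ⟨hk₀', hkm'⟩ := hk'
  obtain ⟨c, rfl⟩ := h
  rcases (hk₀.trans hkm).eq_or_lt with rfl | hm
  · omega
  have hc₀ : 0 ≤ c := by rcases hp with hp | hp <;> nlinarith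
  have hc₁ : c ≤ 1 := by rcases hp with hp | hp <;> nlinarith
  interval_cases c <;> omega

theorem kerK_eq_triangleSum (n : ℕ) (x y : ℝ × ℝ) :
    kerK n x y =
      triangleSum n fun a b => chTtil a x.1 * chTtil a y.1 * (chTtil b x.2 * chTtil b y.2) := by
  rw [kerK, triangleSum, ← sum_range_diag_flip]
  refine sum_congr rfl fun m _ => ?_
  rw [← sum_range_reflect]
  refine sum_congr rfl fun j hj => ?_
  rw [mem_range] at hj
  rw [chP, chP, add_tsub_cancel_right, Nat.sub_sub_self (by omega : j ≤ m)]
  ring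

theorem chTtil_cos_mul_chTtil_cos (a : ℕ) (θ θ' : ℝ) :
    chTtil a (cos θ) * chTtil a (cos θ') =
      chEps a * ((cos (a * (θ - θ')) + cos (a * (θ + θ'))) / 2) := by
  unfold chTtil chEps chT
  split_ifs
  · simp_all
  · rw [Polynomial.Chebyshev.T_real_cos, Polynomial.Chebyshev.T_real_cos, mul_sub, mul_add,
      cos_sub, cos_add]
    push_cast
    linear_combination (cos (a * θ) * cos (a * θ')) * Real.mul_self_sqrt (zero_le_two (α := ℝ))

theorem kerK_cos (n : ℕ) (θ φ θ' φ' : ℝ) :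
    kerK n (cos θ, cos φ) (cos θ', cos φ') =
      (trigKernel n (θ - θ') (φ - φ') + trigKernel n (θ - θ') (φ + φ') +
        trigKernel n (θ + θ') (φ - φ') + trigKernel n (θ + θ') (φ + φ')) / 4 := by
  simp only [kerK_eq_triangleSum, chTtil_cos_mul_chTtil_cos, trigKernel, triangleSum,
    ← sum_add_distrib, sum_div]
  refine sum_congr rfl fun a _ => sum_congr rfl fun b _ => ?_
  ring

theorem chT_cos (m : ℤ) (θ : ℝ) : chT m (cos θ) = cos (m * θ) :=
  Polynomial.Chebyshev.T_real_cos θ m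

theorem exists_eq_cos_of_mem_Pad {n : ℕ} {x : ℝ × ℝ} (hx : x ∈ Pad n) :
    ∃ k l : ℤ, k ∈ Set.Icc 0 (n : ℤ) ∧ l ∈ Set.Icc 0 ((n : ℤ) + 1) ∧ Odd (k + l) ∧
      x = (cos (k * (π / n)), cos (l * (π / (n + 1)))) := by
  obtain ⟨k, j, hk, hj₁, hj₂, rfl⟩ := hx
  by_cases hke : Even k
  · refine ⟨k, 2 * j - 1, ⟨by omega, by omega⟩, ⟨by omega, by omega⟩, ?_, ?_⟩
    · rw [Int.odd_iff]; have := Nat.even_iff.mp hke; omega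
    · simp only [padXi, padEta, if_pos hke]
      push_cast
      ring_nf
  · refine ⟨k, 2 * j - 2, ⟨by omega, by omega⟩, ⟨by omega, by omega⟩, ?_, ?_⟩
    · rw [Int.odd_iff]; have := Nat.odd_iff.mp (Nat.not_even_iff_odd.mp hke); omega
    · simp only [padXi, padEta, if_neg hke]
      push_cast
      ring_nf

/-- `K_n^*(x,y) = 0` for distinct Padua points `x, y`. -/
theorem kerKstar_vanishes (n : ℕ) (hn : 1 ≤ n) (x y : ℝ × ℝ)
    (hx : x ∈ Pad n) (hy : y ∈ Pad n) (hxy : x ≠ y) :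
    kerKstar n x y = 0 := by
  obtain ⟨k, l, hk, hl, hkl, rfl⟩ := exists_eq_cos_of_mem_Pad hx
  obtain ⟨k', l', hk', hl', hkl', rfl⟩ := exists_eq_cos_of_mem_Pad hy
  have htrig : ∀ p q : ℤ, (p = k - k' ∨ p = k + k') → (q = l - l' ∨ q = l + l') →
      trigKernel n (p * (π / n)) (q * (π / (n + 1))) = cos (p * π) := by
    intro p q hp hq
    refine trigKernel_padua (by omega) ?_ fun ⟨hpd, hqd⟩ => hxy ?_
    · rw [Int.odd_iff] at hkl hkl'
      rw [Int.even_iff]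
      rcases hp with rfl | rfl <;> rcases hq with rfl | rfl <;> omega
    · rw [eq_of_two_mul_dvd_sub_or_add hk hk' hp hpd, eq_of_two_mul_dvd_sub_or_add hl hl' hq hqd]
  simp only [kerKstar, kerK_cos, ← sub_mul, ← add_mul, ← Int.cast_sub, ← Int.cast_add]
  rw [htrig _ _ (.inl rfl) (.inl rfl), htrig _ _ (.inl rfl) (.inr rfl),
    htrig _ _ (.inr rfl) (.inl rfl), htrig _ _ (.inr rfl) (.inr rfl), chT_cos, chT_cos]
  have hn' : (n : ℝ) ≠ 0 := by positivity
  rw [Int.cast_natCast, mul_left_comm, mul_div_cancel₀ _ hn', mul_left_comm, mul_div_cancel₀ _ hn']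
  push_cast
  rw [sub_mul, add_mul, cos_sub, cos_add]
  ring
end

section
/- The fundamental Lagrange polynomials for the Padua points are ℓ_{k,j}(x) = K_n*(x, x_{k,j}) / K_n*(x_{k,j}, x_{k,j}): they satisfy ℓ_{k,j}(x_{k',j'}) = δ_{kk'}δ_{jj'} for all Padua points x_{k',j'}, and ℓ_{k,j} ∈ Π_n². -/
open Real MeasureTheory Finset

noncomputable def ee (r : ℕ) : ℝ := if r = 0 then 1 else 2

lemma ee_nonneg (r : ℕ) : 0 ≤ ee r := by unfold ee; split <;> norm_num

/-- multiplied Dirichlet kernel for cosines -/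
lemma dirichlet_cos (θ : ℝ) (M : ℕ) :
    Real.sin (θ/2) * (∑ r ∈ range (M+1), ee r * Real.cos (r * θ)) =
      Real.sin ((M + 1/2) * θ) := by
  induction M with
  | zero => simp [ee]; ring_nf
  | succ M ih =>
    rw [Finset.sum_range_succ, mul_add, ih]
    have h1 : ((M:ℝ) + 1 + 1/2) * θ = ((M + 1/2) * θ) + θ := by push_cast; ring
    have h2 : ((M:ℝ) + 1) * θ = ((M + 1/2) * θ) + θ/2 := by push_cast; ring
    have h3 : θ = θ/2 + θ/2 := by ring
    push_cast
    rw [h1, h2, Real.sin_add ((M + 1/2) * θ) θ, Real.cos_add]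
    rw [show Real.cos θ = Real.cos (θ/2+θ/2) by rw [← h3],
        show Real.sin θ = Real.sin (θ/2+θ/2) by rw [← h3], Real.cos_add, Real.sin_add]
    have e0 : ee (M+1) = 2 := by simp [ee]
    rw [e0]
    linear_combination (-(Real.sin ((M + 1/2) * θ))) * (Real.sin_sq_add_cos_sq (θ/2))
lemma ee_sum (M : ℕ) : ∑ i ∈ range (M+1), ee i = 2*M+1 := by
  induction M with
  | zero => simp [ee]
  | succ M ih => rw [Finset.sum_range_succ, ih]; simp [ee]; push_cast; ring

lemma cos_int_pi_mul_cos_int_pi {u v : ℤ} (h : Even (u+v)) :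
    Real.cos (u*π) * Real.cos (v*π) = 1 := by
  obtain ⟨w, hw⟩ := h
  have h1 : Real.cos ((u:ℝ)*π + (v:ℝ)*π) = 1 := by
    have : (u:ℝ)*π + (v:ℝ)*π = (w:ℝ) * (2*π) := by
      have h0 : ((u:ℝ)) + v = (w:ℝ) + w := by exact_mod_cast congrArg (fun z : ℤ => (z:ℝ)) hw
      nlinarith [h0, Real.pi_pos, sq_nonneg π]
    rw [this, Real.cos_int_mul_two_pi]
  have h2 : Real.cos ((u:ℝ)*π - (v:ℝ)*π) = 1 := by
    have : (u:ℝ)*π - (v:ℝ)*π = ((w - v:ℤ):ℝ) * (2*π) := by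
      have h0 : ((u:ℝ)) + v = (w:ℝ) + w := by exact_mod_cast congrArg (fun z : ℤ => (z:ℝ)) hw
      push_cast; nlinarith [h0, Real.pi_pos, sq_nonneg π]
    rw [this, Real.cos_int_mul_two_pi]
  have := Real.cos_add ((u:ℝ)*π) ((v:ℝ)*π)
  have h3 := Real.cos_sub ((u:ℝ)*π) ((v:ℝ)*π)
  rw [h1] at this; rw [h2] at h3
  nlinarith [this, h3]

lemma cos_int_pi_eq {u v : ℤ} (h : Even (u+v)) : Real.cos (u*π) = Real.cos (v*π) := by
  have h1 := cos_int_pi_mul_cos_int_pi h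
  have h2 : Real.cos ((u:ℝ)*π) ^ 2 = 1 := by
    have := Real.cos_sq ((u:ℝ)*π)
    have h3 : Real.cos (2*((u:ℝ)*π)) = 1 := by
      rw [show 2*((u:ℝ)*π) = (u:ℝ)*(2*π) by ring, Real.cos_int_mul_two_pi]
    rw [h3] at this; rw [this]; ring
  nlinarith [h1, h2, sq_nonneg (Real.cos ((u:ℝ)*π) - Real.cos ((v:ℝ)*π)), sq_nonneg (Real.cos ((u:ℝ)*π) + Real.cos ((v:ℝ)*π))]

lemma sin_div_ne_zero {N : ℕ} (hN : 1 ≤ N) {v : ℤ} (hv : ¬ ((2*(N:ℤ)) ∣ v)) :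
    Real.sin ((v:ℝ)*π/(2*N)) ≠ 0 := by
  intro h
  rw [Real.sin_eq_zero_iff] at h
  obtain ⟨m, hm⟩ := h
  apply hv
  refine ⟨m, ?_⟩
  have hN0 : ((2*N : ℝ)) ≠ 0 := by positivity
  have hπ : (π:ℝ) ≠ 0 := Real.pi_ne_zero
  have : (v:ℝ) = 2*(N:ℝ)*m := by
    field_simp at hm
    nlinarith [hm, Real.pi_pos]
  exact_mod_cast this

lemma cos_int_pi_of_even {u : ℤ} (hu : Even u) : Real.cos ((u:ℝ)*π) = 1 := by
  obtain ⟨w, hw⟩ := hu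
  have h0 : ((u:ℝ)) = (w:ℝ) + w := by exact_mod_cast congrArg (fun z : ℤ => (z:ℝ)) hw
  rw [show (u:ℝ)*π = (w:ℝ)*(2*π) by rw [h0]; ring, Real.cos_int_mul_two_pi]

lemma dirichlet_cos' (θ : ℝ) (M : ℕ) :
    Real.sin (θ/2) * (2 * (∑ r ∈ range (M+1), Real.cos (r * θ)) - 1) =
      Real.sin ((M + 1/2) * θ) := by
  rw [← dirichlet_cos θ M]
  congr 1
  rw [Finset.mul_sum]
  rw [show (1:ℝ) = ∑ r ∈ range (M+1), (if r = 0 then (1:ℝ) else 0) by simp]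
  rw [← Finset.sum_sub_distrib]
  apply Finset.sum_congr rfl
  intro r _
  by_cases h : r = 0 <;> simp [h, ee] <;> norm_num

lemma sum_cos_eq_one {n : ℕ} (hn : 1 ≤ n) {u : ℤ} (hu : Even u) (hnd : ¬ ((2*(n:ℤ)) ∣ u)) :
    ∑ r ∈ range (n+1), Real.cos (r * ((u:ℝ)*π/n)) = 1 := by
  have hn0 : (n:ℝ) ≠ 0 := by positivity
  set θ : ℝ := (u:ℝ)*π/n with hθ
  have hs : Real.sin (θ/2) ≠ 0 := by
    rw [show θ/2 = (u:ℝ)*π/(2*n) by rw [hθ]; ring]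
    exact sin_div_ne_zero hn hnd
  have hD := dirichlet_cos' θ n
  have hang : ((n:ℝ) + 1/2) * θ = (u:ℝ)*π + θ/2 := by
    rw [hθ]; field_simp
  rw [hang, Real.sin_add, cos_int_pi_of_even hu] at hD
  have : Real.sin ((u:ℝ)*π) = 0 := Real.sin_int_mul_pi u
  rw [this] at hD
  have h2 : Real.sin (θ/2) * (2 * (∑ r ∈ range (n+1), Real.cos (r * θ)) - 1) =
      Real.sin (θ/2) * 1 := by rw [hD]; ring
  have := mul_left_cancel₀ hs h2
  linarith [this]

lemma T_eval_case2 {n : ℕ} (hn : 1 ≤ n) {u v : ℤ} (huv : Even (u+v))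
    (hv : ¬ ((2*((n:ℤ)+1)) ∣ v)) :
    ∑ r ∈ range (n+1), ee r * Real.cos (r * ((u:ℝ)*π/n)) *
      (∑ i ∈ range (n-r+1), ee i * Real.cos (i * ((v:ℝ)*π/(n+1)))) = Real.cos ((u:ℝ)*π) := by
  have hn0 : (n:ℝ) ≠ 0 := by positivity
  have hn1 : ((n:ℝ)+1) ≠ 0 := by positivity
  set α : ℝ := (u:ℝ)*π/n with hα
  set β : ℝ := (v:ℝ)*π/(n+1) with hβ
  have hβ2 : β/2 = (v:ℝ)*π/(2*((n+1:ℕ):ℝ)) := by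
    push_cast; rw [hβ]
    rw [div_div]
    congr 1
    ring
  have hsh : Real.sin (β/2) ≠ 0 := by
    rw [hβ2]; exact sin_div_ne_zero (by omega) hv
  have hnβ : ((n:ℝ)+1) * β = (v:ℝ)*π := by rw [hβ]; field_simp
  have hnα : (n:ℝ) * α = (u:ℝ)*π := by rw [hα]; field_simp
  have hprod : Real.cos ((u:ℝ)*π) * Real.cos ((v:ℝ)*π) = 1 := cos_int_pi_mul_cos_int_pi huv
  have hcoseq : Real.cos ((v:ℝ)*π) = Real.cos ((u:ℝ)*π) :=
    cos_int_pi_eq (by rw [add_comm] at huv; exact huv)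
  -- the sine-flip identity
  have hflip : ∀ x : ℝ, Real.sin ((v:ℝ)*π - x) = -(Real.cos ((v:ℝ)*π) * Real.sin x) := by
    intro x
    rw [Real.sin_sub, Real.sin_int_mul_pi]; ring
  have hcflip : ∀ x : ℝ, Real.cos ((u:ℝ)*π - x) = Real.cos ((u:ℝ)*π) * Real.cos x := by
    intro x
    rw [Real.cos_sub, Real.sin_int_mul_pi]; ring
  set t : ℕ → ℝ := fun r => Real.cos (r * α) * Real.sin ((r + 1/2) * β) with ht
  -- U = -sin(β/2)
  have hU : ∑ r ∈ range (n+1), ee r * t r = - Real.sin (β/2) := by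
    have hrev : ∑ r ∈ range (n+1), ee (n-r) * t (n-r) = ∑ r ∈ range (n+1), ee r * t r := by
      have := Finset.sum_range_reflect (fun r => ee r * t r) (n+1)
      simpa using this
    have hstep : ∀ r ∈ range (n+1), ee (n-r) * t (n-r) = -(ee (n-r) * t r) := by
      intro r hr
      rw [Finset.mem_range] at hr
      have hrn : r ≤ n := by omega
      have hcast : ((n-r:ℕ):ℝ) = (n:ℝ) - r := by
        rw [Nat.cast_sub hrn]
      have h1 : ((n-r:ℕ):ℝ) * α = (u:ℝ)*π - r * α := by rw [hcast]; rw [← hnα]; ring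
      have h2 : (((n-r:ℕ):ℝ) + 1/2) * β = (v:ℝ)*π - ((r:ℝ) + 1/2) * β := by
        rw [hcast, ← hnβ]; ring
      rw [ht]; simp only
      rw [h1, h2, hflip, hcflip]
      have : Real.cos ((u:ℝ)*π) * Real.cos ((r:ℝ)*α) *
          -(Real.cos ((v:ℝ)*π) * Real.sin (((r:ℝ)+1/2)*β)) =
          -((Real.cos ((u:ℝ)*π) * Real.cos ((v:ℝ)*π)) *
            (Real.cos ((r:ℝ)*α) * Real.sin (((r:ℝ)+1/2)*β))) := by ring
      rw [this, hprod]; ring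
    have h2U : (2:ℝ) * (∑ r ∈ range (n+1), ee r * t r) =
        ∑ r ∈ range (n+1), (ee r - ee (n-r)) * t r := by
      rw [two_mul]
      nth_rewrite 2 [← hrev]
      rw [← Finset.sum_add_distrib]
      apply Finset.sum_congr rfl
      intro r hr
      rw [hstep r hr]; ring
    have hsplit : ∑ r ∈ range (n+1), (ee r - ee (n-r)) * t r = t n - t 0 := by
      have hcong : ∀ r ∈ range (n+1), (ee r - ee (n-r)) * t r =
          (if r = 0 then -(t 0) else 0) + (if r = n then t n else 0) := by
        intro r hr
        rw [Finset.mem_range] at hr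
        by_cases h0 : r = 0
        · subst h0
          rw [if_pos rfl, if_neg (by omega : ¬ (0:ℕ) = n)]
          simp only [Nat.sub_zero]
          unfold ee
          rw [if_pos rfl, if_neg (by omega : ¬ n = 0)]
          ring
        · by_cases hn' : r = n
          · subst hn'
            rw [if_neg h0, if_pos rfl, Nat.sub_self]
            unfold ee
            rw [if_neg h0, if_pos rfl]
            ring
          · have h1 : n - r ≠ 0 := by omega
            rw [if_neg h0, if_neg hn']
            unfold ee
            rw [if_neg h0, if_neg h1]
            ring
      rw [Finset.sum_congr rfl hcong, Finset.sum_add_distrib]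
      rw [Finset.sum_ite_eq' (range (n+1)) 0 (fun _ => -(t 0)),
          Finset.sum_ite_eq' (range (n+1)) n (fun _ => t n)]
      simp only [Finset.mem_range]
      rw [if_pos (by omega), if_pos (by omega)]
      ring
    have ht0 : t 0 = Real.sin (β/2) := by
      rw [ht]; simp only [Nat.cast_zero, zero_mul, Real.cos_zero, one_mul, zero_add]
      congr 1; ring
    have htn : t n = - Real.sin (β/2) := by
      rw [ht]; simp only
      have h2 : ((n:ℝ) + 1/2) * β = (v:ℝ)*π - β/2 := by rw [← hnβ]; ring
      rw [hnα, h2, hflip]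
      have : Real.cos ((u:ℝ)*π) * -(Real.cos ((v:ℝ)*π) * Real.sin (β/2)) =
          -((Real.cos ((u:ℝ)*π) * Real.cos ((v:ℝ)*π)) * Real.sin (β/2)) := by ring
      rw [this, hprod]; ring
    have hfin : (2:ℝ) * (∑ r ∈ range (n+1), ee r * t r) = -2 * Real.sin (β/2) := by
      rw [h2U, hsplit, ht0, htn]; ring
    linarith [hfin]
  -- multiply LHS by sin(β/2)
  have hmain : Real.sin (β/2) * (∑ r ∈ range (n+1), ee r * Real.cos (r * α) *
      (∑ i ∈ range (n-r+1), ee i * Real.cos (i * β))) =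
      Real.sin (β/2) * Real.cos ((u:ℝ)*π) := by
    rw [Finset.mul_sum]
    have hcong : ∀ r ∈ range (n+1),
        Real.sin (β/2) * (ee r * Real.cos (r * α) *
          (∑ i ∈ range (n-r+1), ee i * Real.cos (i * β))) =
        -(Real.cos ((v:ℝ)*π)) * (ee r * t r) := by
      intro r hr
      rw [Finset.mem_range] at hr
      have hrn : r ≤ n := by omega
      have hD := dirichlet_cos β (n-r)
      have hcast : ((n-r:ℕ):ℝ) = (n:ℝ) - r := by rw [Nat.cast_sub hrn]
      have hang : (((n-r:ℕ):ℝ) + 1/2) * β = (v:ℝ)*π - ((r:ℝ)+1/2)*β := by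
        rw [hcast, ← hnβ]; ring
      rw [hang, hflip] at hD
      rw [ht]; simp only
      calc Real.sin (β/2) * (ee r * Real.cos (r * α) *
            (∑ i ∈ range (n-r+1), ee i * Real.cos (i * β)))
          = ee r * Real.cos (r * α) *
            (Real.sin (β/2) * ∑ i ∈ range (n-r+1), ee i * Real.cos (i * β)) := by ring
        _ = ee r * Real.cos (r * α) * (-(Real.cos ((v:ℝ)*π) * Real.sin (((r:ℝ)+1/2)*β))) := by
            rw [hD]
        _ = -(Real.cos ((v:ℝ)*π)) * (ee r * (Real.cos (r*α) * Real.sin (((r:ℝ)+1/2)*β))) := by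
            ring
    rw [Finset.sum_congr rfl hcong, ← Finset.mul_sum, hU]
    rw [hcoseq]; ring
  have := mul_left_cancel₀ hsh hmain
  exact this

lemma T_eval_case1 {n : ℕ} (hn : 1 ≤ n) {u v : ℤ} (huv : Even (u+v))
    (hv : (2*((n:ℤ)+1)) ∣ v) (hu : ¬ ((2*(n:ℤ)) ∣ u)) :
    ∑ r ∈ range (n+1), ee r * Real.cos (r * ((u:ℝ)*π/n)) *
      (∑ i ∈ range (n-r+1), ee i * Real.cos (i * ((v:ℝ)*π/(n+1)))) = Real.cos ((u:ℝ)*π) := by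
  have hn0 : (n:ℝ) ≠ 0 := by positivity
  have hn1 : ((n:ℝ)+1) ≠ 0 := by positivity
  obtain ⟨w, hw⟩ := hv
  have hveven : Even v := ⟨((n:ℤ)+1)*w, by rw [hw]; ring⟩
  have hueven : Even u := by
    rcases huv with ⟨s, hs⟩; rcases hveven with ⟨tt, htt⟩; exact ⟨s - tt, by omega⟩
  have hcosu : Real.cos ((u:ℝ)*π) = 1 := cos_int_pi_of_even hueven
  set α : ℝ := (u:ℝ)*π/n with hα
  have hnα : (n:ℝ) * α = (u:ℝ)*π := by rw [hα]; field_simp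
  have hcα : ∀ r : ℕ, r ≤ n → Real.cos (((n-r:ℕ):ℝ) * α) = Real.cos (r * α) := by
    intro r hr
    have hcast : ((n-r:ℕ):ℝ) = (n:ℝ) - r := by rw [Nat.cast_sub hr]
    rw [hcast, show ((n:ℝ) - r) * α = (u:ℝ)*π - r*α by rw [← hnα]; ring,
       Real.cos_sub, Real.sin_int_mul_pi, hcosu]
    ring
  -- inner sums are constant
  have hinner : ∀ r : ℕ, (∑ i ∈ range (n-r+1), ee i * Real.cos (i * ((v:ℝ)*π/(n+1))))
      = 2*((n-r:ℕ):ℝ)+1 := by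
    intro r
    have hco : ∀ i : ℕ, Real.cos (i * ((v:ℝ)*π/(n+1))) = 1 := by
      intro i
      have : (i:ℝ) * ((v:ℝ)*π/(n+1)) = ((i*w:ℤ):ℝ) * (2*π) := by
        have hvr : (v:ℝ) = 2*((n:ℝ)+1)*w := by exact_mod_cast congrArg (fun z:ℤ => (z:ℝ)) hw
        push_cast [hvr]
        field_simp
      rw [this, Real.cos_int_mul_two_pi]
    calc (∑ i ∈ range (n-r+1), ee i * Real.cos (i * ((v:ℝ)*π/(n+1))))
        = ∑ i ∈ range (n-r+1), ee i := by
          apply Finset.sum_congr rfl; intro i _; rw [hco i]; ring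
      _ = 2*((n-r:ℕ):ℝ)+1 := ee_sum _
  have hLHS : ∑ r ∈ range (n+1), ee r * Real.cos (r * α) *
      (∑ i ∈ range (n-r+1), ee i * Real.cos (i * ((v:ℝ)*π/(n+1)))) =
      ∑ r ∈ range (n+1), ee r * Real.cos (r * α) * (2*((n-r:ℕ):ℝ)+1) := by
    apply Finset.sum_congr rfl; intro r _; rw [hinner r]
  rw [hLHS, hcosu]
  set f : ℕ → ℝ := fun r => ee r * Real.cos (r * α) * (2*((n-r:ℕ):ℝ)+1) with hf
  have hrev : ∑ r ∈ range (n+1), f (n-r) = ∑ r ∈ range (n+1), f r := by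
    have := Finset.sum_range_reflect f (n+1)
    simpa using this
  have h2A : (2:ℝ) * (∑ r ∈ range (n+1), f r) =
      ∑ r ∈ range (n+1), ((4*(n:ℝ)+4) - (2*(n:ℝ)+1) *
        ((if r = 0 then (1:ℝ) else 0) + (if r = n then (1:ℝ) else 0))) * Real.cos (r * α) := by
    rw [two_mul]
    nth_rewrite 1 [← hrev]
    rw [← Finset.sum_add_distrib]
    apply Finset.sum_congr rfl
    intro r hr
    rw [Finset.mem_range] at hr
    have hrn : r ≤ n := by omega
    have hsub : n - (n - r) = r := by omega
    have hfnr : f (n-r) = ee (n-r) * Real.cos (r * α) * (2*(r:ℝ)+1) := by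
      rw [hf]; simp only
      rw [hcα r hrn, hsub]
    rw [hfnr, hf]; simp only
    have hc1 : ((n-r:ℕ):ℝ) = (n:ℝ) - r := by rw [Nat.cast_sub hrn]
    by_cases h0 : r = 0
    · subst h0
      rw [if_pos rfl, if_neg (by omega : ¬ (0:ℕ) = n)]
      unfold ee
      rw [if_pos rfl, if_neg (by omega : ¬ n - 0 = 0)]
      simp only [Nat.sub_zero, Nat.cast_zero]
      push_cast
      ring
    · by_cases hn' : r = n
      · subst hn'
        rw [if_neg h0, if_pos rfl]
        unfold ee
        rw [if_neg h0, Nat.sub_self, if_pos rfl]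
        simp only [Nat.sub_self, Nat.cast_zero]
        push_cast
        ring
      · have h1 : n - r ≠ 0 := by omega
        rw [if_neg h0, if_neg hn']
        unfold ee
        rw [if_neg h0, if_neg h1, hc1]
        push_cast
        ring
  have hsum1 : ∑ r ∈ range (n+1), Real.cos (r * α) = 1 := sum_cos_eq_one hn hueven hu
  have hexp : ∑ r ∈ range (n+1), ((4*(n:ℝ)+4) - (2*(n:ℝ)+1) *
        ((if r = 0 then (1:ℝ) else 0) + (if r = n then (1:ℝ) else 0))) * Real.cos (r * α)
      = (4*(n:ℝ)+4) * (∑ r ∈ range (n+1), Real.cos (r * α))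
        - (2*(n:ℝ)+1) * (∑ r ∈ range (n+1),
            ((if r = 0 then (1:ℝ) else 0) + (if r = n then (1:ℝ) else 0)) * Real.cos (r * α)) := by
    rw [Finset.mul_sum, Finset.mul_sum, ← Finset.sum_sub_distrib]
    apply Finset.sum_congr rfl
    intro r _
    ring
  have hind : ∑ r ∈ range (n+1),
      ((if r = 0 then (1:ℝ) else 0) + (if r = n then (1:ℝ) else 0)) * Real.cos (r * α) = 2 := by
    have hcong : ∀ r ∈ range (n+1),
        ((if r = 0 then (1:ℝ) else 0) + (if r = n then (1:ℝ) else 0)) * Real.cos (r * α) =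
        (if r = 0 then Real.cos (r*α) else 0) + (if r = n then Real.cos (r*α) else 0) := by
      intro r _
      split_ifs <;> ring
    rw [Finset.sum_congr rfl hcong, Finset.sum_add_distrib]
    rw [Finset.sum_ite_eq' (range (n+1)) 0 (fun r => Real.cos (r*α)),
        Finset.sum_ite_eq' (range (n+1)) n (fun r => Real.cos (r*α))]
    simp only [Finset.mem_range]
    rw [if_pos (by omega), if_pos (by omega)]
    rw [Nat.cast_zero, zero_mul, Real.cos_zero, hnα, hcosu]
    norm_num
  have : (2:ℝ) * (∑ r ∈ range (n+1), f r) = 2 := by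
    rw [h2A, hexp, hsum1, hind]; ring
  linarith [this]

lemma T_eval {n : ℕ} (hn : 1 ≤ n) {u v : ℤ} (huv : Even (u+v))
    (hnd : (2*((n:ℤ)+1)) ∣ v → ¬ ((2*(n:ℤ)) ∣ u)) :
    ∑ r ∈ range (n+1), ee r * Real.cos (r * ((u:ℝ)*π/n)) *
      (∑ i ∈ range (n-r+1), ee i * Real.cos (i * ((v:ℝ)*π/(n+1)))) = Real.cos ((u:ℝ)*π) := by
  by_cases h : (2*((n:ℤ)+1)) ∣ v
  · exact T_eval_case1 hn huv h (hnd h)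
  · exact T_eval_case2 hn huv h

lemma triangle_sum (N : ℕ) (f : ℕ → ℕ → ℝ) :
    ∑ m ∈ range (N+1), ∑ i ∈ range (m+1), f (m-i) i =
    ∑ r ∈ range (N+1), ∑ i ∈ range (N-r+1), f r i := by
  induction N with
  | zero => simp
  | succ N ih =>
    rw [Finset.sum_range_succ, ih]
    have hlast : ∑ i ∈ range (N+1+1), f (N+1-i) i = ∑ r ∈ range (N+2), f r (N+1-r) := by
      have := Finset.sum_range_reflect (fun i => f (N+1-i) i) (N+2)
      have hcong : ∀ j ∈ range (N+2), f (N+1-(N+1-j)) (N+1-j) = f j (N+1-j) := by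
        intro j hj
        rw [Finset.mem_range] at hj
        congr 2
        omega
      calc ∑ i ∈ range (N+1+1), f (N+1-i) i
          = ∑ j ∈ range (N+2), f (N+1-(N+2-1-j)) (N+2-1-j) := by
            rw [Finset.sum_range_reflect (fun i => f (N+1-i) i) (N+2)]
        _ = ∑ j ∈ range (N+2), f (N+1-(N+1-j)) (N+1-j) := by
            apply Finset.sum_congr rfl; intro j _; congr 2 <;> omega
        _ = ∑ r ∈ range (N+2), f r (N+1-r) := Finset.sum_congr rfl hcong
    rw [hlast]
    have hrhs : ∑ r ∈ range (N+2), ∑ i ∈ range (N+1-r+1), f r i =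
        (∑ r ∈ range (N+1), ∑ i ∈ range (N-r+1), f r i) + ∑ r ∈ range (N+2), f r (N+1-r) := by
      rw [Finset.sum_range_succ]
      have h1 : ∀ r ∈ range (N+1), ∑ i ∈ range (N+1-r+1), f r i =
          (∑ i ∈ range (N-r+1), f r i) + f r (N+1-r) := by
        intro r hr
        rw [Finset.mem_range] at hr
        have : N+1-r+1 = (N-r+1)+1 := by omega
        rw [this, Finset.sum_range_succ]
        congr 2
        omega
      rw [Finset.sum_congr rfl h1, Finset.sum_add_distrib]
      have h2 : N+1-(N+1)+1 = 1 := by omega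
      rw [h2, Finset.sum_range_one]
      rw [Finset.sum_range_succ (fun r => f r (N+1-r)) (N+1)]
      have h3 : N+1-(N+1) = 0 := by omega
      rw [h3]
      ring
    rw [hrhs]

lemma chTtil_cos (m : ℕ) (t t' : ℝ) :
    chTtil m (Real.cos t) * chTtil m (Real.cos t') =
      ee m * (Real.cos (m*t) * Real.cos (m*t')) := by
  unfold chTtil chT
  by_cases h : m = 0
  · subst h; simp [ee]
  · rw [if_neg h, if_neg h, Polynomial.Chebyshev.T_real_cos, Polynomial.Chebyshev.T_real_cos]
    have hee : ee m = 2 := by unfold ee; rw [if_neg h]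
    rw [hee]
    have h2 : Real.sqrt 2 * Real.sqrt 2 = 2 := Real.mul_self_sqrt (by norm_num)
    push_cast
    calc Real.sqrt 2 * Real.cos ((m:ℝ)*t) * (Real.sqrt 2 * Real.cos ((m:ℝ)*t')) =
        (Real.sqrt 2 * Real.sqrt 2) * (Real.cos ((m:ℝ)*t) * Real.cos ((m:ℝ)*t')) := by ring
      _ = 2 * (Real.cos ((m:ℝ)*t) * Real.cos ((m:ℝ)*t')) := by rw [h2]

lemma int_div_bound {N : ℤ} (hN : 0 < N) {x : ℤ} (h : 2*N ∣ x) (h1 : -N ≤ x) (h2 : x ≤ 2*N) :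
    x = 0 ∨ x = 2*N := by
  obtain ⟨m, hm⟩ := h
  have hm0 : 0 ≤ m := by nlinarith
  have hm1 : m ≤ 1 := by nlinarith
  have : m = 0 ∨ m = 1 := by omega
  rcases this with h | h <;> subst h <;> [left; right] <;> omega

lemma kstar_offdiag {n : ℕ} (hn : 1 ≤ n) {a b c d : ℕ}
    (ha : a ≤ n) (hc : c ≤ n) (hb : b ≤ n+1) (hd : d ≤ n+1)
    (hab : Odd (a+b)) (hcd : Odd (c+d)) (hne : ¬ (a = c ∧ b = d)) :
    kerKstar n (Real.cos ((a:ℝ)*π/n), Real.cos ((b:ℝ)*π/(n+1)))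
      (Real.cos ((c:ℝ)*π/n), Real.cos ((d:ℝ)*π/(n+1))) = 0 := by
  have hn0 : (n:ℝ) ≠ 0 := by positivity
  have hn1 : ((n:ℝ)+1) ≠ 0 := by positivity
  obtain ⟨p, hp⟩ := hab
  obtain ⟨q, hq⟩ := hcd
  have hp' : (a:ℤ) + b = 2*p + 1 := by exact_mod_cast hp
  have hq' : (c:ℤ) + d = 2*q + 1 := by exact_mod_cast hq
  have hE11 : Even (((a:ℤ)+c) + ((b:ℤ)+d)) := ⟨(p:ℤ)+q+1, by omega⟩
  have hE12 : Even (((a:ℤ)+c) + ((b:ℤ)-d)) := ⟨(p:ℤ)+q+1-d, by omega⟩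
  have hE21 : Even (((a:ℤ)-c) + ((b:ℤ)+d)) := ⟨(p:ℤ)-q+d, by omega⟩
  have hE22 : Even (((a:ℤ)-c) + ((b:ℤ)-d)) := ⟨(p:ℤ)-q, by omega⟩
  have hNpos : (0:ℤ) < (n:ℤ) := by exact_mod_cast hn
  have hN1pos : (0:ℤ) < (n:ℤ)+1 := by omega
  have hu1eq : (2*(n:ℤ)) ∣ ((a:ℤ)+c) → a = c ∧ (a = 0 ∨ a = n) := by
    intro h
    have := int_div_bound hNpos h (by omega) (by omega)
    omega
  have hu2eq : (2*(n:ℤ)) ∣ ((a:ℤ)-c) → a = c := by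
    intro h
    have := int_div_bound hNpos h (by omega) (by omega)
    omega
  have hv1eq : (2*((n:ℤ)+1)) ∣ ((b:ℤ)+d) → b = d := by
    intro h
    have := int_div_bound hN1pos h (by omega) (by omega)
    omega
  have hv2eq : (2*((n:ℤ)+1)) ∣ ((b:ℤ)-d) → b = d := by
    intro h
    have := int_div_bound hN1pos h (by omega) (by omega)
    omega
  have hC1 : (2*((n:ℤ)+1)) ∣ ((b:ℤ)+d) → ¬ ((2*(n:ℤ)) ∣ ((a:ℤ)+c)) := by
    intro hv hu; exact hne ⟨(hu1eq hu).1, hv1eq hv⟩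
  have hC2 : (2*((n:ℤ)+1)) ∣ ((b:ℤ)-d) → ¬ ((2*(n:ℤ)) ∣ ((a:ℤ)+c)) := by
    intro hv hu; exact hne ⟨(hu1eq hu).1, hv2eq hv⟩
  have hC3 : (2*((n:ℤ)+1)) ∣ ((b:ℤ)+d) → ¬ ((2*(n:ℤ)) ∣ ((a:ℤ)-c)) := by
    intro hv hu; exact hne ⟨hu2eq hu, hv1eq hv⟩
  have hC4 : (2*((n:ℤ)+1)) ∣ ((b:ℤ)-d) → ¬ ((2*(n:ℤ)) ∣ ((a:ℤ)-c)) := by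
    intro hv hu; exact hne ⟨hu2eq hu, hv2eq hv⟩
  have hT11 := T_eval hn hE11 hC1
  have hT12 := T_eval hn hE12 hC2
  have hT21 := T_eval hn hE21 hC3
  have hT22 := T_eval hn hE22 hC4
  -- step A : kernel as a triangular double sum
  have hkerK : kerK n (Real.cos ((a:ℝ)*π/n), Real.cos ((b:ℝ)*π/(n+1)))
      (Real.cos ((c:ℝ)*π/n), Real.cos ((d:ℝ)*π/(n+1))) =
      ∑ r ∈ range (n+1), ∑ i ∈ range (n-r+1),
        (ee r * (Real.cos (r*((a:ℝ)*π/n)) * Real.cos (r*((c:ℝ)*π/n)))) *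
        (ee i * (Real.cos (i*((b:ℝ)*π/(n+1))) * Real.cos (i*((d:ℝ)*π/(n+1))))) := by
    unfold kerK
    rw [← triangle_sum n (fun r i =>
        (ee r * (Real.cos (r*((a:ℝ)*π/n)) * Real.cos (r*((c:ℝ)*π/n)))) *
        (ee i * (Real.cos (i*((b:ℝ)*π/(n+1))) * Real.cos (i*((d:ℝ)*π/(n+1))))))]
    apply Finset.sum_congr rfl; intro m _
    apply Finset.sum_congr rfl; intro i _
    unfold chP
    simp only
    calc chTtil (m-i) (Real.cos ((a:ℝ)*π/n)) * chTtil i (Real.cos ((b:ℝ)*π/(n+1))) *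
          (chTtil (m-i) (Real.cos ((c:ℝ)*π/n)) * chTtil i (Real.cos ((d:ℝ)*π/(n+1))))
        = (chTtil (m-i) (Real.cos ((a:ℝ)*π/n)) * chTtil (m-i) (Real.cos ((c:ℝ)*π/n))) *
          (chTtil i (Real.cos ((b:ℝ)*π/(n+1))) * chTtil i (Real.cos ((d:ℝ)*π/(n+1)))) := by ring
      _ = _ := by rw [chTtil_cos, chTtil_cos]
  -- step B : product-to-sum
  have houter : ∀ r : ℕ, Real.cos (r*((a:ℝ)*π/n)) * Real.cos (r*((c:ℝ)*π/n)) =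
      (Real.cos (r*((((a:ℤ)+c:ℤ):ℝ)*π/n)) + Real.cos (r*((((a:ℤ)-c:ℤ):ℝ)*π/n)))/2 := by
    intro r
    have e1 : (r:ℝ)*((((a:ℤ)+c:ℤ):ℝ)*π/n) = r*((a:ℝ)*π/n) + r*((c:ℝ)*π/n) := by
      push_cast; ring
    have e2 : (r:ℝ)*((((a:ℤ)-c:ℤ):ℝ)*π/n) = r*((a:ℝ)*π/n) - r*((c:ℝ)*π/n) := by
      push_cast; ring
    rw [e1, e2, Real.cos_add, Real.cos_sub]; ring
  have hinner : ∀ i : ℕ, Real.cos (i*((b:ℝ)*π/(n+1))) * Real.cos (i*((d:ℝ)*π/(n+1))) =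
      (Real.cos (i*((((b:ℤ)+d:ℤ):ℝ)*π/(n+1))) + Real.cos (i*((((b:ℤ)-d:ℤ):ℝ)*π/(n+1))))/2 := by
    intro i
    have e1 : (i:ℝ)*((((b:ℤ)+d:ℤ):ℝ)*π/(n+1)) = i*((b:ℝ)*π/(n+1)) + i*((d:ℝ)*π/(n+1)) := by
      push_cast; ring
    have e2 : (i:ℝ)*((((b:ℤ)-d:ℤ):ℝ)*π/(n+1)) = i*((b:ℝ)*π/(n+1)) - i*((d:ℝ)*π/(n+1)) := by
      push_cast; ring
    rw [e1, e2, Real.cos_add, Real.cos_sub]; ring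
  have hK2 : kerK n (Real.cos ((a:ℝ)*π/n), Real.cos ((b:ℝ)*π/(n+1)))
      (Real.cos ((c:ℝ)*π/n), Real.cos ((d:ℝ)*π/(n+1))) =
      (1/4) * ((∑ r ∈ range (n+1), ee r * Real.cos (r * ((((a:ℤ)+c:ℤ):ℝ)*π/n)) *
          (∑ i ∈ range (n-r+1), ee i * Real.cos (i * ((((b:ℤ)+d:ℤ):ℝ)*π/(n+1))))) +
        (∑ r ∈ range (n+1), ee r * Real.cos (r * ((((a:ℤ)+c:ℤ):ℝ)*π/n)) *
          (∑ i ∈ range (n-r+1), ee i * Real.cos (i * ((((b:ℤ)-d:ℤ):ℝ)*π/(n+1))))) +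
        (∑ r ∈ range (n+1), ee r * Real.cos (r * ((((a:ℤ)-c:ℤ):ℝ)*π/n)) *
          (∑ i ∈ range (n-r+1), ee i * Real.cos (i * ((((b:ℤ)+d:ℤ):ℝ)*π/(n+1))))) +
        (∑ r ∈ range (n+1), ee r * Real.cos (r * ((((a:ℤ)-c:ℤ):ℝ)*π/n)) *
          (∑ i ∈ range (n-r+1), ee i * Real.cos (i * ((((b:ℤ)-d:ℤ):ℝ)*π/(n+1)))))) := by
    rw [hkerK]
    have hpt : ∀ r ∈ range (n+1), ∑ i ∈ range (n-r+1),
        (ee r * (Real.cos (r*((a:ℝ)*π/n)) * Real.cos (r*((c:ℝ)*π/n)))) *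
        (ee i * (Real.cos (i*((b:ℝ)*π/(n+1))) * Real.cos (i*((d:ℝ)*π/(n+1))))) =
        (1/4) * (ee r * Real.cos (r * ((((a:ℤ)+c:ℤ):ℝ)*π/n)) *
            (∑ i ∈ range (n-r+1), ee i * Real.cos (i * ((((b:ℤ)+d:ℤ):ℝ)*π/(n+1)))) +
          ee r * Real.cos (r * ((((a:ℤ)+c:ℤ):ℝ)*π/n)) *
            (∑ i ∈ range (n-r+1), ee i * Real.cos (i * ((((b:ℤ)-d:ℤ):ℝ)*π/(n+1)))) +
          ee r * Real.cos (r * ((((a:ℤ)-c:ℤ):ℝ)*π/n)) *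
            (∑ i ∈ range (n-r+1), ee i * Real.cos (i * ((((b:ℤ)+d:ℤ):ℝ)*π/(n+1)))) +
          ee r * Real.cos (r * ((((a:ℤ)-c:ℤ):ℝ)*π/n)) *
            (∑ i ∈ range (n-r+1), ee i * Real.cos (i * ((((b:ℤ)-d:ℤ):ℝ)*π/(n+1))))) := by
      intro r _
      have hptin : ∀ i ∈ range (n-r+1),
          (ee r * (Real.cos (r*((a:ℝ)*π/n)) * Real.cos (r*((c:ℝ)*π/n)))) *
          (ee i * (Real.cos (i*((b:ℝ)*π/(n+1))) * Real.cos (i*((d:ℝ)*π/(n+1))))) =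
          (1/4) * (ee r * Real.cos (r * ((((a:ℤ)+c:ℤ):ℝ)*π/n)) *
              (ee i * Real.cos (i * ((((b:ℤ)+d:ℤ):ℝ)*π/(n+1)))) +
            ee r * Real.cos (r * ((((a:ℤ)+c:ℤ):ℝ)*π/n)) *
              (ee i * Real.cos (i * ((((b:ℤ)-d:ℤ):ℝ)*π/(n+1)))) +
            ee r * Real.cos (r * ((((a:ℤ)-c:ℤ):ℝ)*π/n)) *
              (ee i * Real.cos (i * ((((b:ℤ)+d:ℤ):ℝ)*π/(n+1)))) +
            ee r * Real.cos (r * ((((a:ℤ)-c:ℤ):ℝ)*π/n)) *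
              (ee i * Real.cos (i * ((((b:ℤ)-d:ℤ):ℝ)*π/(n+1))))) := by
        intro i _
        rw [houter r, hinner i]
        ring
      rw [Finset.sum_congr rfl hptin]
      rw [← Finset.mul_sum]
      congr 1
      rw [Finset.sum_add_distrib, Finset.sum_add_distrib, Finset.sum_add_distrib]
      rw [← Finset.mul_sum, ← Finset.mul_sum, ← Finset.mul_sum, ← Finset.mul_sum]
    rw [Finset.sum_congr rfl hpt]
    rw [← Finset.mul_sum]
    congr 1
    rw [Finset.sum_add_distrib, Finset.sum_add_distrib, Finset.sum_add_distrib]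
  -- step C : evaluate
  have hcos21 : Real.cos ((((a:ℤ)-c:ℤ):ℝ)*π) = Real.cos ((((a:ℤ)+c:ℤ):ℝ)*π) :=
    cos_int_pi_eq ⟨(a:ℤ), by ring⟩
  have hker_val : kerK n (Real.cos ((a:ℝ)*π/n), Real.cos ((b:ℝ)*π/(n+1)))
      (Real.cos ((c:ℝ)*π/n), Real.cos ((d:ℝ)*π/(n+1))) = Real.cos ((((a:ℤ)+c:ℤ):ℝ)*π) := by
    rw [hK2, hT11, hT12, hT21, hT22, hcos21]
    ring
  unfold kerKstar
  rw [hker_val]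
  unfold chT
  simp only
  rw [Polynomial.Chebyshev.T_real_cos, Polynomial.Chebyshev.T_real_cos]
  have hna : ((n:ℤ):ℝ) * ((a:ℝ)*π/n) = (a:ℝ)*π := by push_cast; field_simp
  have hnc : ((n:ℤ):ℝ) * ((c:ℝ)*π/n) = (c:ℝ)*π := by push_cast; field_simp
  rw [hna, hnc]
  have hsum : (((a:ℤ)+c:ℤ):ℝ)*π = (a:ℝ)*π + (c:ℝ)*π := by push_cast; ring
  rw [hsum, Real.cos_add]
  have hsa : Real.sin ((a:ℝ)*π) = 0 := by
    have := Real.sin_int_mul_pi (a:ℤ); push_cast at this; exact this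
  rw [hsa]
  ring

lemma kstar_diag_pos {n : ℕ} (hn : 1 ≤ n) (y : ℝ × ℝ) : 0 < kerKstar n y y := by
  have hsq : ∀ m i : ℕ, 0 ≤ chP m i y * chP m i y := fun m i => mul_self_nonneg _
  have hg : ∀ m : ℕ, (0:ℝ) ≤ ∑ i ∈ range (m+1), chP m i y * chP m i y :=
    fun m => Finset.sum_nonneg (fun i _ => hsq m i)
  have hsub : ({0, n} : Finset ℕ) ⊆ range (n+1) := by
    intro m hm
    simp only [Finset.mem_insert, Finset.mem_singleton] at hm
    rw [Finset.mem_range]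
    omega
  have hbound : ∑ m ∈ ({0, n} : Finset ℕ), (∑ i ∈ range (m+1), chP m i y * chP m i y) ≤
      kerK n y y := by
    unfold kerK
    apply Finset.sum_le_sum_of_subset_of_nonneg hsub
    intro m _ _
    exact hg m
  rw [Finset.sum_pair (by omega : (0:ℕ) ≠ n)] at hbound
  have h00 : ∑ i ∈ range (0+1), chP 0 i y * chP 0 i y = 1 := by
    simp [chP, chTtil]
  have hn0term : chP n 0 y * chP n 0 y = 2 * (chT n y.1)^2 := by
    unfold chP chTtil
    rw [if_neg (by omega : ¬ n - 0 = 0), if_pos rfl]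
    have h2 : Real.sqrt 2 * Real.sqrt 2 = 2 := Real.mul_self_sqrt (by norm_num)
    have : n - 0 = n := by omega
    rw [this]
    nlinarith [h2]
  have hnterm : 2 * (chT n y.1)^2 ≤ ∑ i ∈ range (n+1), chP n i y * chP n i y := by
    rw [← hn0term]
    exact Finset.single_le_sum (fun i _ => hsq n i) (by rw [Finset.mem_range]; omega)
  unfold kerKstar
  nlinarith [hbound, hnterm, sq_nonneg (chT n y.1), h00]

lemma chebyT_natDegree_le : ∀ m : ℕ, (Polynomial.Chebyshev.T ℝ (m:ℤ)).natDegree ≤ m := by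
  intro m
  induction m using Nat.strong_induction_on with
  | _ m ih =>
    match m with
    | 0 => simp [Polynomial.Chebyshev.T_zero]
    | 1 => simp [Polynomial.Chebyshev.T_one, Polynomial.natDegree_X_le]
    | (m+2) =>
      have h : ((m+2:ℕ):ℤ) = (m:ℤ) + 2 := by push_cast; ring
      rw [h, Polynomial.Chebyshev.T_add_two]
      apply le_trans (Polynomial.natDegree_sub_le _ _)
      have h1 : (2 * Polynomial.X * Polynomial.Chebyshev.T ℝ ((m:ℤ)+1)).natDegree ≤ m+2 := by
        apply le_trans Polynomial.natDegree_mul_le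
        have h2 : (2 * Polynomial.X : Polynomial ℝ).natDegree ≤ 1 := by
          apply le_trans Polynomial.natDegree_mul_le
          simp [Polynomial.natDegree_X_le]
        have h3 : (Polynomial.Chebyshev.T ℝ ((m:ℤ)+1)).natDegree ≤ m+1 := by
          have := ih (m+1) (by omega)
          rwa [show ((m+1:ℕ):ℤ) = (m:ℤ)+1 by push_cast; ring] at this
        omega
      have h4 : (Polynomial.Chebyshev.T ℝ (m:ℤ)).natDegree ≤ m := ih m (by omega)
      rw [max_le_iff]
      omega
  termination_by structural m => m

lemma totalDegree_aeval_X_le (p : Polynomial ℝ) (i : Fin 2) :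
    (Polynomial.aeval (MvPolynomial.X i : MvPolynomial (Fin 2) ℝ) p).totalDegree ≤
      p.natDegree := by
  rw [Polynomial.aeval_eq_sum_range]
  apply MvPolynomial.totalDegree_finsetSum_le
  intro j hj
  rw [Finset.mem_range] at hj
  apply le_trans (MvPolynomial.totalDegree_smul_le _ _)
  rw [MvPolynomial.totalDegree_X_pow]
  omega

lemma ev2_aeval (x : ℝ × ℝ) (i : Fin 2) (p : Polynomial ℝ) :
    ev2 (Polynomial.aeval (MvPolynomial.X i) p) x =
      p.eval (if i = 0 then x.1 else x.2) := by
  unfold ev2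
  have h := Polynomial.aeval_algHom_apply
    (MvPolynomial.aeval (fun i : Fin 2 => if i = 0 then x.1 else x.2) :
      MvPolynomial (Fin 2) ℝ →ₐ[ℝ] ℝ) (MvPolynomial.X i) p
  rw [MvPolynomial.aeval_X] at h
  rw [← Polynomial.coe_aeval_eq_eval, h, ← MvPolynomial.coe_aeval_eq_eval]
  rfl

lemma chTtil_eq (k : ℕ) (x : ℝ) :
    chTtil k x = (if k = 0 then (1:ℝ) else Real.sqrt 2) * chT k x := by
  unfold chTtil
  by_cases h : k = 0
  · subst h
    rw [if_pos rfl, if_pos rfl]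
    unfold chT
    norm_num [Polynomial.Chebyshev.T_zero]
  · rw [if_neg h, if_neg h]

def etaIdx (k j : ℕ) : ℕ := if Even k then 2*j-1 else 2*j-2

lemma padEta_eq {n k j : ℕ} (hj : 1 ≤ j) :
    padEta n k j = Real.cos ((etaIdx k j : ℝ)*π/(n+1)) := by
  unfold padEta etaIdx
  split_ifs with h
  · congr 2
    rw [Nat.cast_sub (by omega : 1 ≤ 2*j)]
    push_cast; ring
  · congr 2
    rw [Nat.cast_sub (by omega : 2 ≤ 2*j)]
    push_cast; ring

lemma etaIdx_le {n k j : ℕ} (hj1 : 1 ≤ j) (hj2 : j ≤ n/2+1) : etaIdx k j ≤ n+1 := by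
  unfold etaIdx; split_ifs <;> omega

lemma etaIdx_odd (k j : ℕ) (hj1 : 1 ≤ j) : Odd (k + etaIdx k j) := by
  rw [Nat.odd_iff]
  unfold etaIdx
  split_ifs with h
  · rw [Nat.even_iff] at h; omega
  · rw [Nat.not_even_iff] at h; omega

/-- the fundamental Lagrange polynomials at the Padua points are
`ℓ_{k,j}(x) = K_n^*(x, x_{k,j}) / K_n^*(x_{k,j}, x_{k,j})`. -/
theorem padua_fundamental_lagrange (n : ℕ) (hn : 1 ≤ n) (k j : ℕ)
    (hk : k ≤ n) (hj1 : 1 ≤ j) (hj2 : j ≤ n / 2 + 1) :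
    (∃ P : MvPolynomial (Fin 2) ℝ, P.totalDegree ≤ n ∧
        ∀ x : ℝ × ℝ, ev2 P x =
          kerKstar n x (padXi n k, padEta n k j)
            / kerKstar n (padXi n k, padEta n k j) (padXi n k, padEta n k j)) ∧
    (∀ k' j' : ℕ, k' ≤ n → 1 ≤ j' → j' ≤ n / 2 + 1 →
        kerKstar n (padXi n k', padEta n k' j') (padXi n k, padEta n k j)
            / kerKstar n (padXi n k, padEta n k j) (padXi n k, padEta n k j) =
          if k = k' ∧ j = j' then 1 else 0) := by
  have hKpos : 0 < kerKstar n (padXi n k, padEta n k j) (padXi n k, padEta n k j) :=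
    kstar_diag_pos hn _
  constructor
  · -- the fundamental Lagrange polynomial
    refine ⟨MvPolynomial.C (kerKstar n (padXi n k, padEta n k j) (padXi n k, padEta n k j))⁻¹ *
      ((∑ m ∈ range (n+1), ∑ i ∈ range (m+1),
        MvPolynomial.C ((if m - i = 0 then (1:ℝ) else Real.sqrt 2) *
            (if i = 0 then (1:ℝ) else Real.sqrt 2) *
            chP m i (padXi n k, padEta n k j)) *
          (Polynomial.aeval (MvPolynomial.X (0:Fin 2)) (Polynomial.Chebyshev.T ℝ ((m-i:ℕ):ℤ)) *
           Polynomial.aeval (MvPolynomial.X (1:Fin 2)) (Polynomial.Chebyshev.T ℝ ((i:ℕ):ℤ))))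
      - MvPolynomial.C (chT n (padXi n k)) *
          Polynomial.aeval (MvPolynomial.X (0:Fin 2)) (Polynomial.Chebyshev.T ℝ ((n:ℕ):ℤ))),
      ?_, ?_⟩
    · -- total degree bound
      apply le_trans (MvPolynomial.totalDegree_mul _ _)
      rw [MvPolynomial.totalDegree_C]
      rw [zero_add]
      apply le_trans (MvPolynomial.totalDegree_sub _ _)
      rw [max_le_iff]
      constructor
      · apply MvPolynomial.totalDegree_finsetSum_le
        intro m hm
        apply MvPolynomial.totalDegree_finsetSum_le
        intro i hi
        rw [Finset.mem_range] at hm hi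
        apply le_trans (MvPolynomial.totalDegree_mul _ _)
        rw [MvPolynomial.totalDegree_C, zero_add]
        apply le_trans (MvPolynomial.totalDegree_mul _ _)
        have h1 := le_trans (totalDegree_aeval_X_le (Polynomial.Chebyshev.T ℝ ((m-i:ℕ):ℤ)) 0)
          (chebyT_natDegree_le (m-i))
        have h2 := le_trans (totalDegree_aeval_X_le (Polynomial.Chebyshev.T ℝ ((i:ℕ):ℤ)) 1)
          (chebyT_natDegree_le i)
        omega
      · apply le_trans (MvPolynomial.totalDegree_mul _ _)
        rw [MvPolynomial.totalDegree_C, zero_add]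
        exact le_trans (totalDegree_aeval_X_le _ _) (chebyT_natDegree_le n)
    · -- evaluation identity
      intro x
      have hev : ∀ (i : Fin 2) (p : Polynomial ℝ),
          MvPolynomial.eval (fun i : Fin 2 => if i = 0 then x.1 else x.2)
            (Polynomial.aeval (MvPolynomial.X i) p) = p.eval (if i = 0 then x.1 else x.2) := by
        intro i p
        have := ev2_aeval x i p
        unfold ev2 at this
        exact this
      unfold ev2
      simp only [map_mul, map_sub, map_sum, MvPolynomial.eval_C, hev]
      simp only [eq_self_iff_true, if_true, if_neg (by decide : ¬ (1:Fin 2) = 0)]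
      have hker : (∑ m ∈ range (n+1), ∑ i ∈ range (m+1),
          (if m - i = 0 then (1:ℝ) else Real.sqrt 2) *
            (if i = 0 then (1:ℝ) else Real.sqrt 2) *
            chP m i (padXi n k, padEta n k j) *
          ((Polynomial.Chebyshev.T ℝ ((m-i:ℕ):ℤ)).eval x.1 *
           (Polynomial.Chebyshev.T ℝ ((i:ℕ):ℤ)).eval x.2)) =
          kerK n x (padXi n k, padEta n k j) := by
        unfold kerK
        apply Finset.sum_congr rfl; intro m _
        apply Finset.sum_congr rfl; intro i _
        rw [show chP m i x = chTtil (m-i) x.1 * chTtil i x.2 from rfl]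
        rw [chTtil_eq (m-i) x.1, chTtil_eq i x.2]
        unfold chT
        ring
      rw [hker]
      unfold kerKstar
      rw [div_eq_mul_inv]
      unfold chT
      ring
  · -- delta property
    intro k' j' hk' hj1' hj2'
    by_cases hcase : k = k' ∧ j = j'
    · rw [if_pos hcase]
      obtain ⟨h1, h2⟩ := hcase
      subst h1; subst h2
      exact div_self hKpos.ne'
    · rw [if_neg hcase]
      have hz : kerKstar n (padXi n k', padEta n k' j') (padXi n k, padEta n k j) = 0 := by
        rw [padEta_eq hj1', padEta_eq hj1]
        rw [show padXi n k' = Real.cos ((k':ℝ)*π/n) from rfl,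
            show padXi n k = Real.cos ((k:ℝ)*π/n) from rfl]
        apply kstar_offdiag hn hk' hk (etaIdx_le hj1' hj2') (etaIdx_le hj1 hj2)
          (etaIdx_odd k' j' hj1') (etaIdx_odd k j hj1)
        rintro ⟨h1, h2⟩
        apply hcase
        refine ⟨h1.symm, ?_⟩
        subst h1
        unfold etaIdx at h2
        split_ifs at h2 <;> omega
      rw [hz, zero_div]
end
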